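/- Suppose a $\pi$-invariant Markov kernel $P$ satisfies, for all nonnegative non-constant $g\in L^2(\pi)$, the spectral-profile-type inequality $\mathcal{E}(P,g) \ge \mathrm{Var}_\pi(g)\cdot F(\pi(g)^2/\mathrm{Var}_\pi(g))$ where $F$ is positive, decreasing, and $\limsup_{v\to0^+}F(v)>0$. Define $F^*(w)=\inf_{v\ge0}\{F(v)+wv\}$. Then for every $f\in L^2(\pi)$ and every $w>0$, setting $s = 2/F^*(w)$ and $\beta(s) = 2w/F^*(w)$, one has the super-Poincaré inequality $\mathrm{Var}_\pi(f) \le s\cdot\mathcal{E}(P,f) + \beta(s)\cdot\pi(|f|)^2$. -/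

import Mathlib

open MeasureTheory ProbabilityTheory Real Filter
open scoped ENNReal

noncomputable section

variable {E : Type*} [MeasurableSpace E]

/-- The Dirichlet form `𝓔(P,f) = ⟨(Id-P)f, f⟩_{L²(π)}`. -/
def dirE (pm : Measure E) (P : Kernel E E) (f : E → ℝ) : ℝ :=
  ∫ x, (f x - ∫ y, f y ∂(P x)) * f x ∂pm

/-- The variance of `f` under `pm`. -/
def var' (pm : Measure E) (f : E → ℝ) : ℝ :=
  ∫ x, (f x - ∫ y, f y ∂pm) ^ 2 ∂pm

/-- The Legendre-type transform `F*(w) = inf_{v ≥ 0} {F(v) + w v}`. -/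
def Fstar (F : ℝ → ℝ) (w : ℝ) : ℝ :=
  sInf {r | ∃ v : ℝ, 0 ≤ v ∧ r = F v + w * v}

/-!
The spectral profile is applied to `f₊` and `f₋` separately. By the Legendre bound
`F(v) ≥ F*(w) - w v` at `v = π(g)² / Var(g)`, it yields `Var(g) F*(w) ≤ 𝓔(P,g) + w π(g)²` for
every nonnegative `g`. Summing this for `g = f₊, f₋` and using `Var(f) ≤ 2 (Var(f₊) + Var(f₋))`,
`𝓔(P,f₊) + 𝓔(P,f₋) ≤ 𝓔(P,f)` (the cross terms `⟨P f₊, f₋⟩`, `⟨P f₋, f₊⟩` are nonnegative) and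
`π(f₊)² + π(f₋)² ≤ π(|f|)²` gives the claim. Invariance of `π` makes `P` a contraction of
`L²(π)`, so that all Dirichlet forms involved are integrals of integrable functions, and it gives
`𝓔(P,g) = 0` for `g` constant a.e., the case `Var(g) = 0` not covered by the spectral profile.
-/

section Legendre

variable {F : ℝ → ℝ} {w : ℝ}

lemma Fstar_le (hF : ∀ v, 0 ≤ v → 0 ≤ F v) (hw : 0 ≤ w) {v : ℝ} (hv : 0 ≤ v) :
    Fstar F w ≤ F v + w * v :=
  csInf_le ⟨0, by rintro _ ⟨u, hu, rfl⟩; exact add_nonneg (hF u hu) (mul_nonneg hw hu)⟩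
    ⟨v, hv, rfl⟩

lemma le_Fstar {c : ℝ} (h : ∀ v, 0 ≤ v → c ≤ F v + w * v) : c ≤ Fstar F w :=
  le_csInf ⟨F 0 + w * 0, 0, le_rfl, rfl⟩ (by rintro _ ⟨v, hv, rfl⟩; exact h v hv)

lemma Fstar_pos (hF : ∀ v, 0 ≤ v → 0 < F v) (hFanti : AntitoneOn F (Set.Ici 0)) (hw : 0 < w) :
    0 < Fstar F w := by
  refine (lt_min (hF 1 zero_le_one) hw).trans_le (le_Fstar fun v hv => ?_)
  rcases le_total v 1 with hv1 | hv1
  · have := hFanti hv (Set.mem_Ici.2 zero_le_one) hv1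
    nlinarith [min_le_left (F 1) w]
  · nlinarith [min_le_right (F 1) w, hF v hv]

lemma mul_Fstar_le (hF : ∀ v, 0 ≤ v → 0 ≤ F v) (hw : 0 ≤ w) {V u : ℝ} (hV : 0 < V)
    (hu : 0 ≤ u) : V * Fstar F w ≤ V * F (u / V) + w * u := by
  calc V * Fstar F w ≤ V * (F (u / V) + w * (u / V)) :=
        mul_le_mul_of_nonneg_left (Fstar_le hF hw (div_nonneg hu hV.le)) hV.le
    _ = V * F (u / V) + w * u := by field_simp

end Legendre

section Variance

lemma var'_nonneg (μ : Measure E) (g : E → ℝ) : 0 ≤ var' μ g :=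
  integral_nonneg fun _ => sq_nonneg _

variable {μ : Measure E} {g h : E → ℝ}

lemma var'_eq_variance (hg : AEMeasurable g μ) : var' μ g = Var[g; μ] :=
  (variance_eq_integral hg).symm

lemma var'_sub_le [IsFiniteMeasure μ] (hg : MemLp g 2 μ) (hh : MemLp h 2 μ) :
    var' μ (fun x => g x - h x) ≤ 2 * var' μ g + 2 * var' μ h := by
  have hsum := variance_nonneg (fun x => g x + h x) μ
  rw [variance_fun_add hg hh] at hsum
  rw [var'_eq_variance (g := fun x => g x - h x) (hg.sub hh).aemeasurable,
    var'_eq_variance hg.aemeasurable, var'_eq_variance hh.aemeasurable, variance_fun_sub hg hh]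
  linarith

lemma sq_integral_le_integral_sq [IsProbabilityMeasure μ] (hg : MemLp g 2 μ) :
    (∫ x, g x ∂μ) ^ 2 ≤ ∫ x, g x ^ 2 ∂μ := by
  have := variance_nonneg g μ
  rw [variance_eq_sub hg] at this
  simpa [sub_nonneg] using this

end Variance

section MarkovOperator

variable {μ : Measure E} {P : Kernel E E} {g h : E → ℝ}

lemma ae_memLp_two_of_comp_eq (hμ : P ∘ₘ μ = μ) (hgm : Measurable g) (hg : MemLp g 2 μ) :
    ∀ᵐ x ∂μ, MemLp g 2 (P x) := by
  rw [← hμ] at hg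
  filter_upwards [Measure.ae_integrable_of_integrable_comp hg.integrable_sq] with x hx
  exact (memLp_two_iff_integrable_sq hgm.aestronglyMeasurable).2 hx

lemma memLp_two_integral_kernel [IsMarkovKernel P] (hμ : P ∘ₘ μ = μ) (hgm : Measurable g)
    (hg : MemLp g 2 μ) : MemLp (fun x => ∫ y, g y ∂P x) 2 μ := by
  have hPg := hgm.stronglyMeasurable.integral_kernel (κ := P)
  rw [memLp_two_iff_integrable_sq hPg.aestronglyMeasurable]
  have hsq : Integrable (fun y => g y ^ 2) (P ∘ₘ μ) := by
    rw [hμ]; exact hg.integrable_sq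
  refine (Measure.integrable_integral_norm_of_integrable_comp hsq).mono'
    (hPg.aestronglyMeasurable.pow 2) ?_
  filter_upwards [ae_memLp_two_of_comp_eq hμ hgm hg] with x hx
  simpa using sq_integral_le_integral_sq hx

lemma dirE_eq_zero_of_ae_eq_const [IsMarkovKernel P] (hμ : P ∘ₘ μ = μ) {c : ℝ}
    (hg : ∀ᵐ x ∂μ, g x = c) : dirE μ P g = 0 := by
  have hPg : ∀ᵐ x ∂μ, ∫ y, g y ∂P x = c := by
    rw [← hμ] at hg
    filter_upwards [Measure.ae_ae_of_ae_comp hg] with x hx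
    simp [integral_congr_ae hx]
  refine integral_eq_zero_of_ae ?_
  filter_upwards [hg, hPg] with x h₁ h₂
  simp [h₁, h₂]

lemma dirE_add_dirE_le_dirE_sub [IsMarkovKernel P] (hμ : P ∘ₘ μ = μ)
    (hgm : Measurable g) (hhm : Measurable h) (hg : MemLp g 2 μ) (hh : MemLp h 2 μ)
    (hg₀ : ∀ x, 0 ≤ g x) (hh₀ : ∀ x, 0 ≤ h x) (hgh : ∀ x, g x * h x = 0) :
    dirE μ P g + dirE μ P h ≤ dirE μ P (fun x => g x - h x) := by
  set Pg := fun x => ∫ y, g y ∂P x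
  set Ph := fun x => ∫ y, h y ∂P x
  have hPg := memLp_two_integral_kernel hμ hgm hg
  have hPh := memLp_two_integral_kernel hμ hhm hh
  have hP_sub : ∀ᵐ x ∂μ, ∫ y, (g y - h y) ∂P x = Pg x - Ph x := by
    filter_upwards [ae_memLp_two_of_comp_eq hμ hgm hg, ae_memLp_two_of_comp_eq hμ hhm hh]
      with x hgx hhx
    exact integral_sub (hgx.integrable one_le_two) (hhx.integrable one_le_two)
  have hI₁ : Integrable (fun x => (g x - Pg x) * g x) μ := (hg.sub hPg).integrable_mul hg
  have hI₂ : Integrable (fun x => (h x - Ph x) * h x) μ := (hh.sub hPh).integrable_mul hh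
  have hI₃ : Integrable (fun x => Pg x * h x + Ph x * g x) μ :=
    (hPg.integrable_mul hh).add (hPh.integrable_mul hg)
  have hI₁₂ : Integrable (fun x => (g x - Pg x) * g x + (h x - Ph x) * h x) μ := hI₁.add hI₂
  have hsplit : dirE μ P (fun x => g x - h x) =
      dirE μ P g + dirE μ P h + ∫ x, (Pg x * h x + Ph x * g x) ∂μ := by
    rw [dirE, dirE, dirE, ← integral_add hI₁ hI₂, ← integral_add hI₁₂ hI₃]
    refine integral_congr_ae ?_
    filter_upwards [hP_sub] with x hx
    simp only [hx]
    linear_combination (-2) * hgh x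
  have hcross : 0 ≤ ∫ x, (Pg x * h x + Ph x * g x) ∂μ :=
    integral_nonneg fun x => add_nonneg
      (mul_nonneg (integral_nonneg hg₀) (hh₀ x)) (mul_nonneg (integral_nonneg hh₀) (hg₀ x))
  linarith

end MarkovOperator

section PosNegParts

variable {μ : Measure E} {f : E → ℝ}

lemma max_zero_mul_max_neg_zero (a : ℝ) : max a 0 * max (-a) 0 = 0 := by
  rcases le_total a 0 with h | h <;> simp [h]

lemma sq_integral_posPart_add_sq_integral_negPart_le (hf : Integrable f μ) :
    (∫ x, max (f x) 0 ∂μ) ^ 2 + (∫ x, max (-f x) 0 ∂μ) ^ 2 ≤ (∫ x, |f x| ∂μ) ^ 2 := by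
  have habs : ∫ x, |f x| ∂μ = ∫ x, max (f x) 0 ∂μ + ∫ x, max (-f x) 0 ∂μ := by
    rw [← integral_add hf.pos_part hf.neg_part]
    simp only [max_zero_add_max_neg_zero_eq_abs_self]
  have hpos : 0 ≤ ∫ x, max (f x) 0 ∂μ := integral_nonneg fun _ => le_max_right _ _
  have hneg : 0 ≤ ∫ x, max (-f x) 0 ∂μ := integral_nonneg fun _ => le_max_right _ _
  rw [habs]
  nlinarith [mul_nonneg hpos hneg]

end PosNegParts

lemma var'_mul_Fstar_le {μ : Measure E} [IsProbabilityMeasure μ] {P : Kernel E E}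
    [IsMarkovKernel P] (hμ : P ∘ₘ μ = μ) {F : ℝ → ℝ} (hF : ∀ v, 0 ≤ v → 0 ≤ F v) {w : ℝ}
    (hw : 0 ≤ w) {g : E → ℝ} (hg : MemLp g 2 μ)
    (hSP : 0 < var' μ g → var' μ g * F ((∫ x, g x ∂μ) ^ 2 / var' μ g) ≤ dirE μ P g) :
    var' μ g * Fstar F w ≤ dirE μ P g + w * (∫ x, g x ∂μ) ^ 2 := by
  rcases (var'_nonneg μ g).lt_or_eq with hV | hV
  · linarith [hSP hV, mul_Fstar_le hF hw hV (sq_nonneg (∫ x, g x ∂μ))]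
  · have hconst := ae_eq_integral_of_variance_eq_zero hg
      (by rw [← var'_eq_variance hg.aemeasurable, hV])
    rw [← hV, zero_mul, dirE_eq_zero_of_ae_eq_const hμ hconst, zero_add]
    positivity

theorem stmt18_general (pm : Measure E) [IsProbabilityMeasure pm]
    (P : Kernel E E) [IsMarkovKernel P]
    (hinv : ∀ A : Set E, MeasurableSet A → ∫⁻ x, P x A ∂pm = pm A)
    (F : ℝ → ℝ) (hFpos : ∀ v, 0 ≤ v → 0 < F v) (hFdec : AntitoneOn F (Set.Ici 0))
    (hSP : ∀ g : E → ℝ, Measurable g → MemLp g 2 pm → (∀ x, 0 ≤ g x) →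
      0 < var' pm g →
      var' pm g * F ((∫ x, g x ∂pm) ^ 2 / var' pm g) ≤ dirE pm P g)
    (f : E → ℝ) (hfmeas : Measurable f) (hfL2 : MemLp f 2 pm)
    (w : ℝ) (hw : 0 < w) :
    var' pm f ≤ (2 / Fstar F w) * dirE pm P f +
      (2 * w / Fstar F w) * (∫ x, |f x| ∂pm) ^ 2 := by
  have hμ : P ∘ₘ pm = pm := Measure.ext fun A hA => by
    rw [Measure.bind_apply hA P.aemeasurable]; exact hinv A hA
  have hs := Fstar_pos hFpos hFdec hw
  have bound : ∀ g, Measurable g → MemLp g 2 pm → (∀ x, 0 ≤ g x) →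
      var' pm g * Fstar F w ≤ dirE pm P g + w * (∫ x, g x ∂pm) ^ 2 := fun g hgm hg hg₀ =>
    var'_mul_Fstar_le hμ (fun v hv => (hFpos v hv).le) hw.le hg (hSP g hgm hg hg₀)
  set fp := fun x => max (f x) 0
  set fm := fun x => max (-f x) 0
  have hfpm : Measurable fp := hfmeas.max measurable_const
  have hfmm : Measurable fm := hfmeas.neg.max measurable_const
  have hf : f = fun x => fp x - fm x := funext fun x => (max_zero_sub_max_neg_zero_eq_self _).symm
  have hvar : var' pm f ≤ 2 * var' pm fp + 2 * var' pm fm :=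
    hf ▸ var'_sub_le hfL2.pos_part hfL2.neg_part
  have hdir : dirE pm P fp + dirE pm P fm ≤ dirE pm P f :=
    hf ▸ dirE_add_dirE_le_dirE_sub hμ hfpm hfmm hfL2.pos_part hfL2.neg_part
      (fun _ => le_max_right _ _) (fun _ => le_max_right _ _)
      (fun x => max_zero_mul_max_neg_zero (f x))
  have hmean := sq_integral_posPart_add_sq_integral_negPart_le (hfL2.integrable one_le_two)
  rw [div_mul_eq_mul_div, div_mul_eq_mul_div, ← add_div, le_div_iff₀ hs]
  calc var' pm f * Fstar F w ≤ (2 * var' pm fp + 2 * var' pm fm) * Fstar F w :=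
        mul_le_mul_of_nonneg_right hvar hs.le
    _ ≤ 2 * (dirE pm P fp + dirE pm P fm) +
          2 * w * ((∫ x, fp x ∂pm) ^ 2 + (∫ x, fm x ∂pm) ^ 2) := by
        linarith [bound fp hfpm hfL2.pos_part fun _ => le_max_right _ _,
          bound fm hfmm hfL2.neg_part fun _ => le_max_right _ _]
    _ ≤ 2 * dirE pm P f + 2 * w * (∫ x, |f x| ∂pm) ^ 2 := by gcongr

/-- From a spectral-profile-type inequality to a super-Poincaré inequality, with
`s = 2/F*(w)` and `β(s) = 2w/F*(w)`. -/
theorem stmt18 (pm : Measure E) [IsProbabilityMeasure pm]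
    (P : Kernel E E) [IsMarkovKernel P]
    (hinv : ∀ A : Set E, MeasurableSet A → ∫⁻ x, P x A ∂pm = pm A)
    (F : ℝ → ℝ) (hFpos : ∀ v, 0 ≤ v → 0 < F v) (hFdec : AntitoneOn F (Set.Ici 0))
    (hFlim : ∃ c > 0, ∃ᶠ v in nhdsWithin 0 (Set.Ioi 0), c ≤ F v)
    (hSP : ∀ g : E → ℝ, Measurable g → MemLp g 2 pm → (∀ x, 0 ≤ g x) →
      0 < var' pm g →
      var' pm g * F ((∫ x, g x ∂pm) ^ 2 / var' pm g) ≤ dirE pm P g)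
    (f : E → ℝ) (hfmeas : Measurable f) (hfL2 : MemLp f 2 pm)
    (w : ℝ) (hw : 0 < w) :
    var' pm f ≤ (2 / Fstar F w) * dirE pm P f +
      (2 * w / Fstar F w) * (∫ x, |f x| ∂pm) ^ 2 :=
  stmt18_general pm P hinv F hFpos hFdec hSP f hfmeas hfL2 w hw
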